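/- For every n ≥ 5, w(n,1) = w(n-2,1) + w(n-3,0) - 1, where w(n,k) counts compositions of n with parts in {1,2} having exactly k water cells. -/

import Mathlib

/-- A composition of `n`: a list of positive integers summing to `n`. -/
def IsComposition (n : ℕ) (l : List ℕ) : Prop :=
  (∀ x ∈ l, 0 < x) ∧ l.sum = n

/-- All parts of the list lie in {1, 2}. -/
def Parts12 (l : List ℕ) : Prop := ∀ x ∈ l, x = 1 ∨ x = 2

/-- Number of water cells: parts equal to 1 with a part 2 strictly before
and a part 2 strictly after. -/
noncomputable def waterCells (l : List ℕ) : ℕ :=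
  {i : Fin l.length | l.get i = 1 ∧ (∃ j : Fin l.length, j < i ∧ l.get j = 2) ∧
    (∃ j : Fin l.length, i < j ∧ l.get j = 2)}.ncard

/-- `w n k`: number of compositions of `n` with parts in {1,2} and exactly `k` water cells. -/
noncomputable def w (n k : ℕ) : ℕ :=
  {l : List ℕ | Parts12 l ∧ l.sum = n ∧ waterCells l = k}.ncard

/-- Diagonal sums of the water-cell array. -/
noncomputable def d (n : ℕ) : ℕ := ∑ k ∈ Finset.range (n + 1), w (n - k) k

/-- All internal parts (other than the first and last) are even. -/
def InternalEven (l : List ℕ) : Prop := ∀ x ∈ (l.drop 1).dropLast, Even x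

/-!
A composition with parts in `{1, 2}` can be written `1^a ++ m ++ 1^d` with `m` empty or beginning
and ending with a 2, and its water cells are exactly the 1s of `m`. Hence the compositions without
water are `1^a 2^b 1^c`, those with one water cell are `1^a 2^b 1 2^c 1^d` with `b, c > 0`, and
both are counted by their exponent tuples. Among the latter, removing two leading 1s matches
those with `a ≥ 2` with the one-water compositions of `n - 2`, while `(a, b, c, d) ↦
(a + 2 (c - 1), b, d)` matches those with `a < 2` with the water-free compositions
`1^a' 2^b 1^d` of `n - 3` having `b > 0`, that is, all of them but `1^(n-3)`.
-/

def waterSet (l : List ℕ) : Set ℕ :=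
  {i | l[i]? = some 1 ∧ (∃ j < i, l[j]? = some 2) ∧ ∃ j, i < j ∧ l[j]? = some 2}

theorem waterCells_eq_ncard_waterSet (l : List ℕ) : waterCells l = (waterSet l).ncard := by
  rw [waterCells, ← Set.ncard_image_of_injective _ Fin.val_injective]
  congr 1
  ext i
  simp only [Set.mem_image, Set.mem_ofPred_eq, waterSet, List.getElem?_eq_some_iff,
    Fin.exists_iff, List.get_eq_getElem, Fin.lt_def]
  constructor
  · rintro ⟨i, hi, ⟨h1, ⟨j, hj, hji, h2⟩, ⟨k, hk, hik, h3⟩⟩, rfl⟩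
    exact ⟨⟨hi, h1⟩, ⟨j, hji, hj, h2⟩, ⟨k, hik, hk, h3⟩⟩
  · rintro ⟨⟨hi, h1⟩, ⟨j, hji, hj, h2⟩, ⟨k, hik, hk, h3⟩⟩
    exact ⟨i, hi, ⟨h1, ⟨j, hj, hji, h2⟩, ⟨k, hk, hik, h3⟩⟩, rfl⟩

theorem getElem?_append_eq_some_two_iff_of_right {l r : List ℕ} (hr : 2 ∉ r) (j : ℕ) :
    (l ++ r)[j]? = some 2 ↔ l[j]? = some 2 := by
  rcases lt_or_ge j l.length with hj | hj
  · rw [List.getElem?_append_left hj]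
  · rw [List.getElem?_append_right hj, List.getElem?_eq_none hj]
    simpa using fun h => hr (List.mem_of_getElem? h)

theorem getElem?_append_eq_some_two_iff_of_left {p l : List ℕ} (hp : 2 ∉ p) (j : ℕ) :
    (p ++ l)[j]? = some 2 ↔ p.length ≤ j ∧ l[j - p.length]? = some 2 := by
  rcases lt_or_ge j p.length with hj | hj
  · rw [List.getElem?_append_left hj]
    simpa [Nat.not_le.2 hj] using fun h => hp (List.mem_of_getElem? h)
  · rw [List.getElem?_append_right hj]
    simp [hj]

theorem waterSet_append_of_two_notMem_right (l : List ℕ) {r : List ℕ} (hr : 2 ∉ r) :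
    waterSet (l ++ r) = waterSet l := by
  ext i
  simp only [waterSet, Set.mem_ofPred_eq, getElem?_append_eq_some_two_iff_of_right hr]
  constructor
  · rintro ⟨h1, hbefore, j, hij, hj⟩
    have hi : i < l.length := hij.trans (List.getElem?_eq_some_iff.1 hj).1
    exact ⟨by rwa [List.getElem?_append_left hi] at h1, hbefore, j, hij, hj⟩
  · rintro ⟨h1, hbefore, hafter⟩
    exact ⟨List.getElem?_append_left (List.getElem?_eq_some_iff.1 h1).1 ▸ h1, hbefore, hafter⟩

theorem waterSet_append_of_two_notMem_left {p : List ℕ} (l : List ℕ) (hp : 2 ∉ p) :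
    waterSet (p ++ l) = (· + p.length) '' waterSet l := by
  ext i
  simp only [waterSet, Set.mem_ofPred_eq, Set.mem_image,
    getElem?_append_eq_some_two_iff_of_left hp]
  constructor
  · rintro ⟨h1, ⟨j, hji, hpj, hj⟩, k, hik, -, hk⟩
    refine ⟨i - p.length, ⟨?_, ⟨j - p.length, by omega, hj⟩, k - p.length, by omega, hk⟩,
      by omega⟩
    rwa [List.getElem?_append_right (by omega)] at h1
  · rintro ⟨i, ⟨h1, ⟨j, hji, hj⟩, k, hik, hk⟩, rfl⟩
    refine ⟨?_, ⟨j + p.length, by omega, by omega, by simpa using hj⟩,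
      k + p.length, by omega, by omega, by simpa using hk⟩
    rwa [List.getElem?_append_right (by omega), Nat.add_sub_cancel]

theorem List.ncard_setOf_getElem?_eq_some {α : Type*} [DecidableEq α] (l : List α) (x : α) :
    {i : ℕ | l[i]? = some x}.ncard = l.count x := by
  induction l with
  | nil => simp
  | cons y l ih =>
    have hsplit : {i : ℕ | (y :: l)[i]? = some x} =
        (· + 1) '' {i | l[i]? = some x} ∪ (if y = x then {0} else ∅) := by
      ext (_ | i) <;> split_ifs <;> simp_all
    have hfin : {i : ℕ | l[i]? = some x}.Finite :=
      (Set.finite_Iio l.length).subset fun i hi => (List.getElem?_eq_some_iff.1 hi).1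
    rw [hsplit, List.count_cons, ← ih]
    by_cases hyx : y = x
    · rw [if_pos hyx, Set.ncard_union_eq (by simp) (hfin.image _) (Set.finite_singleton 0),
        Set.ncard_image_of_injective _ (add_left_injective 1), Set.ncard_singleton]
      simp [hyx]
    · rw [if_neg hyx, Set.union_empty, Set.ncard_image_of_injective _ (add_left_injective 1)]
      simp [hyx]

theorem waterSet_eq_of_head?_of_getLast? {m : List ℕ} (hhead : m.head? = some 2)
    (hlast : m.getLast? = some 2) : waterSet m = {i | m[i]? = some 1} := by
  rw [List.head?_eq_getElem?] at hhead
  rw [List.getLast?_eq_getElem?] at hlast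
  ext i
  refine ⟨fun h => h.1, fun h1 => ⟨h1, ⟨0, ?_, hhead⟩, m.length - 1, ?_, hlast⟩⟩
  · rcases Nat.eq_zero_or_pos i with rfl | hi
    · simp_all
    · exact hi
  · have hi := (List.getElem?_eq_some_iff.1 h1).1
    rcases eq_or_ne i (m.length - 1) with rfl | hne
    · simp_all
    · omega

theorem waterCells_replicate_append_append (a d : ℕ) {m : List ℕ}
    (hm : m = [] ∨ m.head? = some 2 ∧ m.getLast? = some 2) :
    waterCells (List.replicate a 1 ++ m ++ List.replicate d 1) = m.count 1 := by
  have hones (k : ℕ) : 2 ∉ List.replicate k 1 := by simp [List.mem_replicate]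
  rw [waterCells_eq_ncard_waterSet, waterSet_append_of_two_notMem_right _ (hones d),
    waterSet_append_of_two_notMem_left _ (hones a),
    Set.ncard_image_of_injective _ (add_left_injective _)]
  rcases hm with rfl | ⟨hhead, hlast⟩
  · simp [waterSet]
  · rw [waterSet_eq_of_head?_of_getLast? hhead hlast, List.ncard_setOf_getElem?_eq_some]

namespace Parts12

theorem exists_eq_replicate_append_append {l : List ℕ} (hl : Parts12 l) :
    ∃ a m d, l = List.replicate a 1 ++ m ++ List.replicate d 1 ∧
      (m = [] ∨ m.head? = some 2 ∧ m.getLast? = some 2) := by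
  induction l with
  | nil => exact ⟨0, [], 0, rfl, Or.inl rfl⟩
  | cons x t ih =>
    obtain ⟨a, m, d, rfl, hm⟩ := ih fun y hy => hl y (List.mem_cons_of_mem x hy)
    rcases hl x List.mem_cons_self with rfl | rfl
    · exact ⟨a + 1, m, d, by simp [List.replicate_succ], hm⟩
    · rcases hm with rfl | ⟨-, hlast⟩
      · exact ⟨0, [2], a + d, by simp, Or.inr ⟨rfl, rfl⟩⟩
      · exact ⟨0, 2 :: (List.replicate a 1 ++ m), d, by simp,
          Or.inr ⟨rfl, by simp [List.getLast?_cons, hlast]⟩⟩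

theorem eq_replicate_two_of_count_one_eq_zero {m : List ℕ} (hm : Parts12 m)
    (h : m.count 1 = 0) : m = List.replicate m.length 2 :=
  List.eq_replicate_iff.2 ⟨rfl, fun x hx =>
    (hm x hx).resolve_left fun hx1 => List.count_eq_zero.1 h (hx1 ▸ hx)⟩

theorem exists_eq_replicate_two_append_cons_of_count_one_eq_one {m : List ℕ} (hm : Parts12 m)
    (h : m.count 1 = 1) : ∃ b c, m = List.replicate b 2 ++ 1 :: List.replicate c 2 := by
  obtain ⟨s, t, rfl⟩ := List.append_of_mem (List.count_pos_iff.1 (by omega : 0 < m.count 1))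
  have hst : s.count 1 = 0 ∧ t.count 1 = 0 := by
    simp only [List.count_append, List.count_cons_self] at h
    omega
  refine ⟨s.length, t.length, ?_⟩
  rw [← eq_replicate_two_of_count_one_eq_zero (fun x hx => hm x (by simp [hx])) hst.1,
    ← eq_replicate_two_of_count_one_eq_zero (fun x hx => hm x (by simp [hx])) hst.2]

end Parts12

theorem List.replicate_append_inj {α : Type*} {x : α} {a a' : ℕ} {s s' : List α}
    (hs : s.head? ≠ some x) (hs' : s'.head? ≠ some x)
    (h : List.replicate a x ++ s = List.replicate a' x ++ s') : a = a' ∧ s = s' := by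
  induction a generalizing a' with
  | zero =>
    cases a' with
    | zero => simpa using h
    | succ a' =>
      simp only [List.replicate_zero, List.nil_append] at h
      simp [h, List.replicate_succ] at hs
  | succ a ih =>
    cases a' with
    | zero =>
      simp only [List.replicate_zero, List.nil_append] at h
      simp [← h, List.replicate_succ] at hs'
    | succ a' =>
      obtain ⟨rfl, rfl⟩ := ih (by simpa [List.replicate_succ] using h)
      exact ⟨rfl, rfl⟩

def plateau (a b c : ℕ) : List ℕ :=
  List.replicate a 1 ++ List.replicate b 2 ++ List.replicate c 1

def notchedPlateau (a b c d : ℕ) : List ℕ :=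
  List.replicate a 1 ++ (List.replicate b 2 ++ 1 :: List.replicate c 2) ++ List.replicate d 1

theorem parts12_plateau (a b c : ℕ) : Parts12 (plateau a b c) := by
  intro x
  simp only [plateau, List.mem_append, List.mem_replicate]
  omega

theorem parts12_notchedPlateau (a b c d : ℕ) : Parts12 (notchedPlateau a b c d) := by
  intro x
  simp only [notchedPlateau, List.mem_append, List.mem_cons, List.mem_replicate]
  omega

theorem sum_plateau (a b c : ℕ) : (plateau a b c).sum = a + 2 * b + c := by
  simp [plateau, List.sum_replicate]
  ring

theorem sum_notchedPlateau (a b c d : ℕ) :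
    (notchedPlateau a b c d).sum = a + 2 * b + 1 + 2 * c + d := by
  simp [notchedPlateau, List.sum_replicate]
  ring

theorem waterCells_plateau (a b c : ℕ) : waterCells (plateau a b c) = 0 := by
  rw [plateau, waterCells_replicate_append_append]
  · simp [List.count_replicate]
  · rcases Nat.eq_zero_or_pos b with rfl | hb
    · simp
    · simp [List.head?_replicate, List.getLast?_replicate, hb.ne']

theorem waterCells_notchedPlateau (a b c d : ℕ) (hb : 0 < b) (hc : 0 < c) :
    waterCells (notchedPlateau a b c d) = 1 := by
  rw [notchedPlateau, waterCells_replicate_append_append]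
  · simp [List.count_replicate]
  · simp [List.head?_replicate, List.getLast?_replicate, hb.ne', hc.ne', List.getLast?_cons]

theorem plateau_inj {a b c a' b' c' : ℕ} (hb : 0 < b) (hb' : 0 < b')
    (h : plateau a b c = plateau a' b' c') : a = a' ∧ b = b' ∧ c = c' := by
  simp only [plateau, List.append_assoc] at h
  obtain ⟨ha, h⟩ := List.replicate_append_inj (by simp [List.head?_replicate, hb.ne'])
    (by simp [List.head?_replicate, hb'.ne']) h
  obtain ⟨hb, hc⟩ := List.replicate_append_inj (by simp [List.head?_replicate])
    (by simp [List.head?_replicate]) h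
  exact ⟨ha, hb, List.replicate_left_injective 1 hc⟩

theorem notchedPlateau_inj {a b c d a' b' c' d' : ℕ} (hb : 0 < b) (hb' : 0 < b')
    (h : notchedPlateau a b c d = notchedPlateau a' b' c' d') :
    a = a' ∧ b = b' ∧ c = c' ∧ d = d' := by
  simp only [notchedPlateau, List.append_assoc, List.cons_append] at h
  obtain ⟨ha, h⟩ := List.replicate_append_inj (by simp [List.head?_replicate, hb.ne'])
    (by simp [List.head?_replicate, hb'.ne']) h
  obtain ⟨hb, h⟩ := List.replicate_append_inj (by simp) (by simp) h
  obtain ⟨hc, hd⟩ := List.replicate_append_inj (by simp [List.head?_replicate])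
    (by simp [List.head?_replicate]) (List.cons.inj h).2
  exact ⟨ha, hb, hc, List.replicate_left_injective 1 hd⟩

namespace Parts12

theorem exists_eq_plateau {l : List ℕ} (hl : Parts12 l) (h : waterCells l = 0) :
    ∃ a b c, l = plateau a b c := by
  obtain ⟨a, m, d, rfl, hm⟩ := hl.exists_eq_replicate_append_append
  rw [waterCells_replicate_append_append a d hm] at h
  have hm12 : Parts12 m := fun x hx => hl x (by simp [hx])
  exact ⟨a, m.length, d, by rw [plateau, ← hm12.eq_replicate_two_of_count_one_eq_zero h]⟩

theorem exists_eq_notchedPlateau {l : List ℕ} (hl : Parts12 l) (h : waterCells l = 1) :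
    ∃ a b c d, 0 < b ∧ 0 < c ∧ l = notchedPlateau a b c d := by
  obtain ⟨a, m, d, rfl, hm⟩ := hl.exists_eq_replicate_append_append
  rw [waterCells_replicate_append_append a d hm] at h
  have hm12 : Parts12 m := fun x hx => hl x (by simp [hx])
  obtain ⟨b, c, rfl⟩ := hm12.exists_eq_replicate_two_append_cons_of_count_one_eq_one h
  obtain ⟨hhead, hlast⟩ := hm.resolve_left (by simp)
  refine ⟨a, b, c, d, Nat.pos_of_ne_zero ?_, Nat.pos_of_ne_zero ?_, rfl⟩
  · rintro rfl
    simp at hhead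
  · rintro rfl
    simp [List.getLast?_cons] at hlast

end Parts12

def plateauParams (n : ℕ) : Finset (ℕ × ℕ × ℕ) :=
  (Finset.range (n + 1) ×ˢ Finset.range (n + 1) ×ˢ Finset.range (n + 1)).filter
    fun p => 0 < p.2.1 ∧ p.1 + 2 * p.2.1 + p.2.2 = n

def notchedPlateauParams (n : ℕ) : Finset (ℕ × ℕ × ℕ × ℕ) :=
  (Finset.range (n + 1) ×ˢ Finset.range (n + 1) ×ˢ Finset.range (n + 1) ×ˢ
    Finset.range (n + 1)).filter
    fun p => 0 < p.2.1 ∧ 0 < p.2.2.1 ∧ p.1 + 2 * p.2.1 + 1 + 2 * p.2.2.1 + p.2.2.2 = n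

theorem mem_plateauParams {n a b c : ℕ} :
    (a, b, c) ∈ plateauParams n ↔ 0 < b ∧ a + 2 * b + c = n := by
  simp only [plateauParams, Finset.mem_filter, Finset.mem_product, Finset.mem_range]
  omega

theorem mem_notchedPlateauParams {n a b c d : ℕ} :
    (a, b, c, d) ∈ notchedPlateauParams n ↔
      0 < b ∧ 0 < c ∧ a + 2 * b + 1 + 2 * c + d = n := by
  simp only [notchedPlateauParams, Finset.mem_filter, Finset.mem_product, Finset.mem_range]
  omega

theorem w_zero_eq (n : ℕ) : w n 0 = (plateauParams n).card + 1 := by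
  have hset : {l | Parts12 l ∧ l.sum = n ∧ waterCells l = 0} = insert (List.replicate n 1)
      ((fun p => plateau p.1 p.2.1 p.2.2) '' (plateauParams n : Set (ℕ × ℕ × ℕ))) := by
    ext l
    constructor
    · rintro ⟨hl, rfl, h⟩
      obtain ⟨a, b, c, rfl⟩ := hl.exists_eq_plateau h
      rcases Nat.eq_zero_or_pos b with rfl | hb
      · left
        simp [plateau]
      · exact Or.inr ⟨(a, b, c), mem_plateauParams.2 ⟨hb, (sum_plateau a b c).symm⟩, rfl⟩
    · rintro (rfl | ⟨⟨a, b, c⟩, hp, rfl⟩)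
      · have : List.replicate n 1 = plateau n 0 0 := by simp [plateau]
        exact this ▸ ⟨parts12_plateau n 0 0, by simp [sum_plateau], waterCells_plateau n 0 0⟩
      · exact ⟨parts12_plateau a b c, (sum_plateau a b c).trans (mem_plateauParams.1 hp).2,
          waterCells_plateau a b c⟩
  have hnotMem : List.replicate n 1 ∉
      (fun p => plateau p.1 p.2.1 p.2.2) '' (plateauParams n : Set (ℕ × ℕ × ℕ)) := by
    rintro ⟨⟨a, b, c⟩, hp, h⟩
    have h2 : 2 ∈ plateau a b c := by
      simp [plateau, List.mem_replicate, (mem_plateauParams.1 hp).1.ne']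
    simp [h, List.mem_replicate] at h2
  have hinj : Set.InjOn (fun p => plateau p.1 p.2.1 p.2.2)
      (plateauParams n : Set (ℕ × ℕ × ℕ)) := by
    rintro ⟨a, b, c⟩ hp ⟨a', b', c'⟩ hp' h
    obtain ⟨rfl, rfl, rfl⟩ :=
      plateau_inj (mem_plateauParams.1 hp).1 (mem_plateauParams.1 hp').1 h
    rfl
  rw [w, hset, Set.ncard_insert_of_notMem hnotMem ((Finset.finite_toSet _).image _),
    hinj.ncard_image, Set.ncard_coe_finset]

theorem w_one_eq (n : ℕ) : w n 1 = (notchedPlateauParams n).card := by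
  have hset : {l | Parts12 l ∧ l.sum = n ∧ waterCells l = 1} =
      (fun p => notchedPlateau p.1 p.2.1 p.2.2.1 p.2.2.2) ''
        (notchedPlateauParams n : Set (ℕ × ℕ × ℕ × ℕ)) := by
    ext l
    constructor
    · rintro ⟨hl, rfl, h⟩
      obtain ⟨a, b, c, d, hb, hc, rfl⟩ := hl.exists_eq_notchedPlateau h
      exact ⟨(a, b, c, d),
        mem_notchedPlateauParams.2 ⟨hb, hc, (sum_notchedPlateau a b c d).symm⟩, rfl⟩
    · rintro ⟨⟨a, b, c, d⟩, hp, rfl⟩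
      obtain ⟨hb, hc, hsum⟩ := mem_notchedPlateauParams.1 hp
      exact ⟨parts12_notchedPlateau a b c d, (sum_notchedPlateau a b c d).trans hsum,
        waterCells_notchedPlateau a b c d hb hc⟩
  have hinj : Set.InjOn (fun p => notchedPlateau p.1 p.2.1 p.2.2.1 p.2.2.2)
      (notchedPlateauParams n : Set (ℕ × ℕ × ℕ × ℕ)) := by
    rintro ⟨a, b, c, d⟩ hp ⟨a', b', c', d'⟩ hp' h
    obtain ⟨rfl, rfl, rfl, rfl⟩ := notchedPlateau_inj (mem_notchedPlateauParams.1 hp).1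
      (mem_notchedPlateauParams.1 hp').1 h
    rfl
  rw [w, hset, hinj.ncard_image, Set.ncard_coe_finset]

theorem card_notchedPlateauParams (n : ℕ) : (notchedPlateauParams n).card =
    (notchedPlateauParams (n - 2)).card + (plateauParams (n - 3)).card := by
  rw [← Finset.card_filter_add_card_filter_not (p := fun p => 2 ≤ p.1)]
  congr 1
  · refine Finset.card_bij' (fun p _ => (p.1 - 2, p.2)) (fun p _ => (p.1 + 2, p.2))
      ?_ ?_ ?_ ?_
    all_goals
      rintro ⟨a, b, c, d⟩ hp
      simp only [Finset.mem_filter, mem_notchedPlateauParams, Prod.mk.injEq,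
        and_true] at hp ⊢
      omega
  · refine Finset.card_bij' (fun p _ => (p.1 + 2 * (p.2.2.1 - 1), p.2.1, p.2.2.2))
      (fun p _ => (p.1 % 2, p.2.1, p.1 / 2 + 1, p.2.2)) ?_ ?_ ?_ ?_ <;>
    [rintro ⟨a, b, c, d⟩ hp; rintro ⟨a, b, c⟩ hp;
      rintro ⟨a, b, c, d⟩ hp; rintro ⟨a, b, c⟩ hp] <;>
    simp only [Finset.mem_filter, mem_notchedPlateauParams, mem_plateauParams, Prod.mk.injEq,
      true_and, and_true] at hp ⊢ <;>
    omega

theorem stmt9_general (n : ℕ) :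
    (w n 1 : ℤ) = w (n - 2) 1 + w (n - 3) 0 - 1 := by
  rw [w_one_eq, w_one_eq, w_zero_eq, card_notchedPlateauParams]
  push_cast
  ring

theorem stmt9 (n : ℕ) (hn : 5 ≤ n) :
    (w n 1 : ℤ) = w (n - 2) 1 + w (n - 3) 0 - 1 :=
  stmt9_general n
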